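/- Suppose J satisfies the Bellman inequality J(x) ≥ c(x, π(x)) + J(f(x, π(x))) for a feedback policy π, with J ≥ 0, J(0) = 0, J continuous, positive definite, and radially unbounded, and c(x,u) ≥ α(‖x‖) for a class-K function α. Then the closed-loop system x_{t+1} = f(x_t, π(x_t)) is globally asymptotically stable at the origin. -/

import Mathlib

/-!
Along a closed-loop trajectory `x_{t+1} = F x_t` the Bellman inequality telescopes to
`∑_{i<t} α ‖x_i‖ + J x_t ≤ J x_0`. Since `J ≥ 0`, the series `∑ α ‖x_t‖` converges, so
`α ‖x_t‖ → 0` and hence `x_t → 0`. The same bound gives `α ‖x_t‖ ≤ J x_0`, which is smaller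
than `α ε` once `x_0` is close to the origin, by continuity of `J` and `J 0 = 0`.
-/

open Filter Topology Finset Function

section Telescoping

variable {X : Type*} {F : X → X}

theorem sum_range_add_apply_iterate_le {M : Type*} [AddCommMonoid M] [PartialOrder M]
    [IsOrderedAddMonoid M] {V w : X → M}
    (hdec : ∀ x, w x + V (F x) ≤ V x) (x : X) (t : ℕ) :
    ∑ i ∈ range t, w (F^[i] x) + V (F^[t] x) ≤ V x := by
  induction t with
  | zero => simp
  | succ t ih =>
    calc ∑ i ∈ range (t + 1), w (F^[i] x) + V (F^[t + 1] x)
        = ∑ i ∈ range t, w (F^[i] x) + (w (F^[t] x) + V (F (F^[t] x))) := by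
          rw [sum_range_succ, iterate_succ_apply', add_assoc]
      _ ≤ ∑ i ∈ range t, w (F^[i] x) + V (F^[t] x) := add_le_add_right (hdec _) _
      _ ≤ V x := ih

variable {V w : X → ℝ}

theorem apply_iterate_le_of_add_le (hV : ∀ x, 0 ≤ V x) (hw : ∀ x, 0 ≤ w x)
    (hdec : ∀ x, w x + V (F x) ≤ V x) (x : X) (t : ℕ) : w (F^[t] x) ≤ V x :=
  calc w (F^[t] x) ≤ ∑ i ∈ range (t + 1), w (F^[i] x) :=
        single_le_sum (f := fun i => w (F^[i] x)) (fun _ _ => hw _) (self_mem_range_succ t)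
    _ ≤ V x := le_of_add_le_of_nonneg_left (sum_range_add_apply_iterate_le hdec x (t + 1)) (hV _)

theorem summable_apply_iterate_of_add_le (hV : ∀ x, 0 ≤ V x) (hw : ∀ x, 0 ≤ w x)
    (hdec : ∀ x, w x + V (F x) ≤ V x) (x : X) : Summable fun t => w (F^[t] x) :=
  summable_of_sum_range_le (fun _ => hw _) fun t =>
    le_of_add_le_of_nonneg_left (sum_range_add_apply_iterate_le hdec x t) (hV _)

end Telescoping

section ClassK

variable {α : ℝ → ℝ}

theorem StrictMonoOn.nonneg_of_map_zero (hα : StrictMonoOn α (Set.Ici 0)) (hα0 : α 0 = 0)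
    {s : ℝ} (hs : 0 ≤ s) : 0 ≤ α s :=
  hα0 ▸ hα.monotoneOn Set.self_mem_Ici hs hs

theorem StrictMonoOn.tendsto_zero_of_comp (hα : StrictMonoOn α (Set.Ici 0)) (hα0 : α 0 = 0)
    {ι : Type*} {l : Filter ι} {u : ι → ℝ} (hu : ∀ i, 0 ≤ u i)
    (h : Tendsto (fun i => α (u i)) l (𝓝 0)) : Tendsto u l (𝓝 0) := by
  refine tendsto_order.2 ⟨fun a ha => Eventually.of_forall fun i => ha.trans_le (hu i),
    fun ε hε => ?_⟩
  have hαε : α 0 < α ε := hα Set.self_mem_Ici hε.le hε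
  filter_upwards [(tendsto_order.1 h).2 (α ε) (hα0 ▸ hαε)] with i hi
  exact (hα.lt_iff_lt (hu i) hε.le).1 hi

end ClassK

theorem bellman_inequality_implies_gas_general {n p : ℕ}
    (f : (Fin n → ℝ) → (Fin p → ℝ) → (Fin n → ℝ))
    (c : (Fin n → ℝ) → (Fin p → ℝ) → ℝ)
    (π : (Fin n → ℝ) → (Fin p → ℝ))
    (J : (Fin n → ℝ) → ℝ)
    (α : ℝ → ℝ)
    (hJcont : Continuous J) (hJ0 : J 0 = 0)
    (hJnn : ∀ x, 0 ≤ J x)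
    (hα0 : α 0 = 0)
    (hαmono : StrictMonoOn α (Set.Ici 0))
    (hcα : ∀ x u, α ‖x‖ ≤ c x u)
    (hBell : ∀ x, c x (π x) + J (f x (π x)) ≤ J x) :
    (∀ x0 : Fin n → ℝ,
        Filter.Tendsto (fun t => (fun y => f y (π y))^[t] x0) Filter.atTop (nhds 0)) ∧
    (∀ ε : ℝ, 0 < ε → ∃ δ : ℝ, 0 < δ ∧ ∀ x0 : Fin n → ℝ, ‖x0‖ < δ →
        ∀ t : ℕ, ‖(fun y => f y (π y))^[t] x0‖ < ε) := by
  have hw : ∀ x : Fin n → ℝ, 0 ≤ α ‖x‖ := fun x => hαmono.nonneg_of_map_zero hα0 (norm_nonneg x)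
  have hdec : ∀ x, α ‖x‖ + J (f x (π x)) ≤ J x := fun x =>
    (add_le_add_left (hcα x (π x)) _).trans (hBell x)
  refine ⟨fun x0 => ?_, fun ε hε => ?_⟩
  · exact tendsto_zero_iff_norm_tendsto_zero.2 <| hαmono.tendsto_zero_of_comp hα0
      (fun _ => norm_nonneg _) (summable_apply_iterate_of_add_le hJnn hw hdec x0).tendsto_atTop_zero
  · have hαε : 0 < α ε := hα0 ▸ hαmono Set.self_mem_Ici hε.le hε
    have hJsmall : ∀ᶠ x in 𝓝 0, J x < α ε :=
      hJcont.continuousAt.eventually_lt continuousAt_const (hJ0 ▸ hαε)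
    obtain ⟨δ, hδ, hJδ⟩ := Metric.eventually_nhds_iff.1 hJsmall
    refine ⟨δ, hδ, fun x0 hx0 t => (hαmono.lt_iff_lt (norm_nonneg _) hε.le).1 ?_⟩
    calc α ‖_‖ ≤ J x0 := apply_iterate_le_of_add_le hJnn hw hdec x0 t
      _ < α ε := hJδ (by rwa [dist_zero_right])

/-- a nonnegative, continuous, positive definite, radially unbounded
`J` satisfying the Bellman inequality along a feedback policy `π`, with stage cost
dominating a class-K function of the state norm, renders the closed loop
`x_{t+1} = f(x_t, π(x_t))` globally asymptotically stable at the origin: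
all trajectories converge to `0`, and the origin is Lyapunov stable. -/
theorem bellman_inequality_implies_gas {n p : ℕ}
    (f : (Fin n → ℝ) → (Fin p → ℝ) → (Fin n → ℝ))
    (c : (Fin n → ℝ) → (Fin p → ℝ) → ℝ)
    (π : (Fin n → ℝ) → (Fin p → ℝ))
    (J : (Fin n → ℝ) → ℝ)
    (α : ℝ → ℝ)
    (hf0 : f 0 (π 0) = 0)
    (hJcont : Continuous J) (hJ0 : J 0 = 0)
    (hJnn : ∀ x, 0 ≤ J x) (hJpos : ∀ x, x ≠ 0 → 0 < J x)
    (hJrad : Filter.Tendsto J (Filter.cocompact (Fin n → ℝ)) Filter.atTop)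
    (hα0 : α 0 = 0)
    (hαcont : ContinuousOn α (Set.Ici 0))
    (hαmono : StrictMonoOn α (Set.Ici 0))
    (hcα : ∀ x u, α ‖x‖ ≤ c x u)
    (hBell : ∀ x, c x (π x) + J (f x (π x)) ≤ J x) :
    (∀ x0 : Fin n → ℝ,
        Filter.Tendsto (fun t => (fun y => f y (π y))^[t] x0) Filter.atTop (nhds 0)) ∧
    (∀ ε : ℝ, 0 < ε → ∃ δ : ℝ, 0 < δ ∧ ∀ x0 : Fin n → ℝ, ‖x0‖ < δ →
        ∀ t : ℕ, ‖(fun y => f y (π y))^[t] x0‖ < ε) :=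
  bellman_inequality_implies_gas_general f c π J α hJcont hJ0 hJnn hα0 hαmono hcα hBell
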